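/- arXiv:1703.10240 — 6 statements merged into one kernel-verified Lean document; each statement's English description precedes it below -/
import Mathlib

section
/- With A, M̃ SPD and generalized eigenpairs (λ_i, v_i) as above, inf over P of rank n_c of sup_{v≠0} ‖(I - Π_{M̃}(P))v‖²_{M̃}/‖v‖²_A = 1/λ_{n_c+1}, attained by P_opt = [v₁, …, v_{n_c}]. -/
open Matrix

section Helpers
variable {n m : ℕ}

lemma quad_form_aux (W : Matrix (Fin n) (Fin m) ℝ) (M : Matrix (Fin n) (Fin n) ℝ)
    (x y : Fin m → ℝ) :
    (W.mulVec x) ⬝ᵥ M.mulVec (W.mulVec y) = x ⬝ᵥ ((Wᵀ * M * W).mulVec y) := by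
  rw [show Wᵀ * M * W = Wᵀ * (M * W) from Matrix.mul_assoc _ _ _,
    ← mulVec_mulVec, ← mulVec_mulVec]
  rw [mulVec_transpose, dotProduct_comm, dotProduct_mulVec, dotProduct_comm]

lemma gram_apply_aux (V : Fin n → Fin n → ℝ) (M : Matrix (Fin n) (Fin n) ℝ)
    (f : Fin m → Fin n) (i j : Fin m) :
    ((Matrix.of fun a b => V (f b) a)ᵀ * M * (Matrix.of fun a b => V (f b) a)) i j
      = V (f i) ⬝ᵥ M.mulVec (V (f j)) := by
  simp only [Matrix.mul_apply, Matrix.transpose_apply, Matrix.of_apply, dotProduct,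
    Matrix.mulVec, Finset.sum_mul, Finset.mul_sum]
  rw [Finset.sum_comm]
  exact Finset.sum_congr rfl fun k _ => Finset.sum_congr rfl fun l _ => by ring

lemma sum_castLE_aux (h : m ≤ n) (g : Fin n → ℝ) :
    ∑ j : Fin m, g (Fin.castLE h j) = ∑ i : Fin n, if (i : ℕ) < m then g i else 0 := by
  classical
  set G : ℕ → ℝ := fun k => if hk : k < n then (if k < m then g ⟨k, hk⟩ else 0) else 0 with hG
  have h1 : ∑ j : Fin m, g (Fin.castLE h j) = ∑ k ∈ Finset.range m, G k := by
    rw [← Fin.sum_univ_eq_sum_range]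
    refine Finset.sum_congr rfl fun j _ => ?_
    have hj : (j : ℕ) < n := lt_of_lt_of_le j.2 h
    simp [hG, hj, j.2, Fin.castLE]
  have h2 : ∑ i : Fin n, (if (i : ℕ) < m then g i else 0) = ∑ k ∈ Finset.range n, G k := by
    rw [← Fin.sum_univ_eq_sum_range]
    refine Finset.sum_congr rfl fun i _ => ?_
    simp [hG, i.2]
  rw [h1, h2]
  refine Finset.sum_subset (Finset.range_subset_range.mpr h) fun k hk hnk => ?_
  simp only [Finset.mem_range] at hk hnk
  simp [hG, hk, hnk]

end Helpers

/-- The `M̃`-orthogonal projection onto `range(P)`. -/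
noncomputable def piProj {n nc : ℕ} (Mt : Matrix (Fin n) (Fin n) ℝ)
    (P : Matrix (Fin n) (Fin nc) ℝ) : Matrix (Fin n) (Fin n) ℝ :=
  P * (Pᵀ * Mt * P)⁻¹ * Pᵀ * Mt

/-- `κ(P, v) = ‖(I - Π_M̃(P))v‖²_M̃ / ‖v‖²_A`. -/
noncomputable def kappaTG {n nc : ℕ} (A Mt : Matrix (Fin n) (Fin n) ℝ)
    (P : Matrix (Fin n) (Fin nc) ℝ) (w : Fin n → ℝ) : ℝ :=
  (((1 - piProj Mt P).mulVec w) ⬝ᵥ Mt.mulVec ((1 - piProj Mt P).mulVec w)) /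
    (w ⬝ᵥ A.mulVec w)

/-- `inf_{rank P = n_c} sup_v κ(P,v) = 1/λ_{n_c+1}`, attained at
`P_opt = [v₁ ⋯ v_{n_c}]`: every full-rank `P` has `sup_v κ(P,v) ≥ 1/λ_{n_c+1}`
(witnessed by some `w ≠ 0`), and `κ(P_opt, v) ≤ 1/λ_{n_c+1}` for all `v ≠ 0`. -/
theorem inf_sup_kappa_eq_inv_eigenvalue {n nc : ℕ} (hnc : nc < n)
    (A Mt : Matrix (Fin n) (Fin n) ℝ) (hA : A.PosDef) (hMt : Mt.PosDef)
    (v : Fin n → Fin n → ℝ) (lam : Fin n → ℝ)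
    (heig : ∀ i, A.mulVec (v i) = lam i • Mt.mulVec (v i))
    (horth : ∀ i j, v i ⬝ᵥ Mt.mulVec (v j) = if i = j then (1 : ℝ) else 0)
    (hmono : Monotone lam) (hpos : 0 < lam ⟨nc, hnc⟩) :
    (∀ P : Matrix (Fin n) (Fin nc) ℝ, P.rank = nc →
      ∃ w : Fin n → ℝ, w ≠ 0 ∧ 1 / lam ⟨nc, hnc⟩ ≤ kappaTG A Mt P w) ∧
    (∀ w : Fin n → ℝ, w ≠ 0 →
      kappaTG A Mt (Matrix.of fun i (j : Fin nc) => v (Fin.castLE hnc.le j) i) w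
        ≤ 1 / lam ⟨nc, hnc⟩) := by
  have hvne : ∀ i, v i ≠ 0 := by
    intro i h
    have h1 := horth i i
    rw [h, zero_dotProduct] at h1
    simp at h1
  have hlam : ∀ i, 0 < lam i := by
    intro i
    have h1 : v i ⬝ᵥ A.mulVec (v i) = lam i := by
      rw [heig i, dotProduct_smul, horth i i]; simp
    have h2 := hA.dotProduct_mulVec_pos (hvne i)
    rw [← h1]; simpa using h2
  constructor
  · -- lower bound for arbitrary P
    intro P hP
    have hnc1 : nc + 1 ≤ n := hnc
    set Vc : Matrix (Fin n) (Fin (nc + 1)) ℝ :=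
      Matrix.of fun a b => v (Fin.castLE hnc1 b) a with hVc
    have hVcM : Vcᵀ * Mt * Vc = 1 := by
      ext i j
      rw [hVc, gram_apply_aux, horth]
      simp [Matrix.one_apply, Fin.castLE_inj]
    have hVcA : Vcᵀ * A * Vc = Matrix.diagonal (fun j => lam (Fin.castLE hnc1 j)) := by
      ext i j
      rw [hVc, gram_apply_aux, heig, dotProduct_smul, horth]
      by_cases hij : i = j <;> simp [hij, Matrix.diagonal_apply, Fin.castLE_inj]
    -- find x ≠ 0 in the kernel of Pᵀ Mt Vc
    obtain ⟨x, hx0, hxker⟩ : ∃ x : Fin (nc + 1) → ℝ, x ≠ 0 ∧ (Pᵀ * Mt * Vc).mulVec x = 0 := by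
      have hni : ¬ Function.Injective (Pᵀ * Mt * Vc).mulVecLin := by
        intro hinj
        have h3 := LinearMap.finrank_le_finrank_of_injective hinj
        rw [Module.finrank_fin_fun, Module.finrank_fin_fun] at h3
        omega
      rw [Function.not_injective_iff] at hni
      obtain ⟨a, b, hab, hne⟩ := hni
      refine ⟨a - b, sub_ne_zero_of_ne hne, ?_⟩
      have h4 : (Pᵀ * Mt * Vc).mulVecLin (a - b) = 0 := by
        rw [map_sub, hab, sub_self]
      simpa only [Matrix.mulVecLin_apply] using h4
    set w : Fin n → ℝ := Vc.mulVec x with hw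
    have hwM : w ⬝ᵥ Mt.mulVec w = x ⬝ᵥ x := by
      rw [hw, quad_form_aux, hVcM, one_mulVec]
    have hw0 : w ≠ 0 := by
      intro h
      rw [h, zero_dotProduct] at hwM
      exact hx0 ((dotProduct_self_eq_zero).mp hwM.symm)
    have hproj : (piProj Mt P).mulVec w = 0 := by
      have h1 : (Pᵀ * Mt).mulVec w = 0 := by
        rw [hw, mulVec_mulVec, Matrix.mul_assoc, ← Matrix.mul_assoc]
        exact hxker
      rw [show piProj Mt P = (P * (Pᵀ * Mt * P)⁻¹) * (Pᵀ * Mt) by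
        rw [piProj, Matrix.mul_assoc], ← mulVec_mulVec, h1, mulVec_zero]
    have hwA : w ⬝ᵥ A.mulVec w = ∑ j, lam (Fin.castLE hnc1 j) * (x j * x j) := by
      rw [hw, quad_form_aux, hVcA]
      simp only [dotProduct, mulVec_diagonal]
      exact Finset.sum_congr rfl fun j _ => by ring
    refine ⟨w, hw0, ?_⟩
    have hD : 0 < w ⬝ᵥ A.mulVec w := by simpa using hA.dotProduct_mulVec_pos hw0
    have hkap : kappaTG A Mt P w = (x ⬝ᵥ x) / (w ⬝ᵥ A.mulVec w) := by
      rw [kappaTG, sub_mulVec, one_mulVec, hproj, sub_zero, hwM]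
    rw [hkap, div_le_div_iff₀ hpos hD, one_mul]
    rw [hwA]
    have hxx : x ⬝ᵥ x = ∑ j, x j * x j := rfl
    rw [hxx, Finset.sum_mul]
    refine Finset.sum_le_sum fun j _ => ?_
    have hle : lam (Fin.castLE hnc1 j) ≤ lam ⟨nc, hnc⟩ := by
      apply hmono
      rw [Fin.le_def]
      exact Nat.lt_succ_iff.mp j.2
    nlinarith [mul_self_nonneg (x j)]
  · -- upper bound for P_opt
    intro w hw0
    set Popt : Matrix (Fin n) (Fin nc) ℝ :=
      Matrix.of fun i (j : Fin nc) => v (Fin.castLE hnc.le j) i with hPopt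
    set V : Matrix (Fin n) (Fin n) ℝ := Matrix.of fun a b => v b a with hV
    have hVMV : Vᵀ * Mt * V = 1 := by
      ext i j
      rw [hV, show (Matrix.of fun a b => v b a) = (Matrix.of fun a b => v (id b) a) from rfl,
        gram_apply_aux, horth]
      simp [Matrix.one_apply]
    have hVAV : Vᵀ * A * V = Matrix.diagonal lam := by
      ext i j
      rw [hV, show (Matrix.of fun a b => v b a) = (Matrix.of fun a b => v (id b) a) from rfl,
        gram_apply_aux, heig, dotProduct_smul, horth]
      by_cases hij : i = j <;> simp [hij, Matrix.diagonal_apply]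
    have hPMP : Poptᵀ * Mt * Popt = 1 := by
      ext i j
      rw [hPopt, gram_apply_aux, horth]
      simp [Matrix.one_apply, Fin.castLE_inj]
    set c : Fin n → ℝ := (Vᵀ * Mt).mulVec w with hc
    have hdecomp : V.mulVec c = w := by
      have h1 : V * (Vᵀ * Mt) = 1 := mul_eq_one_comm.mp hVMV
      rw [hc, mulVec_mulVec, h1, one_mulVec]
    set c' : Fin n → ℝ := fun i => if (i : ℕ) < nc then 0 else c i with hc'
    have hu : (1 - piProj Mt Popt).mulVec w = V.mulVec c' := by
      rw [sub_mulVec, one_mulVec, show piProj Mt Popt = Popt * (Poptᵀ * Mt * Popt)⁻¹ * Poptᵀ * Mt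
        from rfl, hPMP, inv_one, Matrix.mul_one]
      have hPw : (Popt * Poptᵀ * Mt).mulVec w = V.mulVec (c - c') := by
        rw [show Popt * Poptᵀ * Mt = Popt * (Poptᵀ * Mt) from Matrix.mul_assoc _ _ _,
          ← mulVec_mulVec]
        have hPtw : (Poptᵀ * Mt).mulVec w = fun j => c (Fin.castLE hnc.le j) := by
          funext j
          rw [hc]
          simp [Matrix.mulVec, Matrix.mul_apply, dotProduct, hPopt, hV]
        rw [hPtw]
        funext k
        have hL : Popt.mulVec (fun j => c (Fin.castLE hnc.le j)) k
            = ∑ i : Fin n, if (i : ℕ) < nc then c i * v i k else 0 := by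
          rw [← sum_castLE_aux hnc.le (fun i : Fin n => c i * v i k)]
          simp only [Matrix.mulVec, dotProduct, hPopt, Matrix.of_apply]
          exact Finset.sum_congr rfl fun j _ => by ring
        rw [hL]
        simp only [Matrix.mulVec, dotProduct, hV, Matrix.of_apply, Pi.sub_apply, hc']
        refine Finset.sum_congr rfl fun i _ => ?_
        by_cases hi : (i : ℕ) < nc <;> simp [hi] <;> ring
      rw [hPw, ← hdecomp, ← Matrix.mulVec_sub, sub_sub_cancel]
    have hN : ((1 - piProj Mt Popt).mulVec w) ⬝ᵥ Mt.mulVec ((1 - piProj Mt Popt).mulVec w)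
        = c' ⬝ᵥ c' := by
      rw [hu, quad_form_aux, hVMV, one_mulVec]
    have hDval : w ⬝ᵥ A.mulVec w = ∑ i, lam i * (c i * c i) := by
      conv_lhs => rw [← hdecomp]
      rw [quad_form_aux, hVAV]
      simp only [dotProduct, mulVec_diagonal]
      exact Finset.sum_congr rfl fun i _ => by ring
    have hD : 0 < w ⬝ᵥ A.mulVec w := by simpa using hA.dotProduct_mulVec_pos hw0
    rw [kappaTG, hN, div_le_div_iff₀ hD hpos, one_mul]
    rw [hDval]
    have hcc : c' ⬝ᵥ c' = ∑ i, c' i * c' i := rfl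
    rw [hcc, Finset.sum_mul]
    refine Finset.sum_le_sum fun i _ => ?_
    by_cases hi : (i : ℕ) < nc
    · simp only [hc', if_pos hi]
      have := (hlam i).le
      nlinarith [mul_self_nonneg (c i)]
    · simp only [hc', if_neg hi]
      have hle : lam ⟨nc, hnc⟩ ≤ lam i := by
        apply hmono
        rw [Fin.le_def]
        exact Nat.le_of_not_lt hi
      nlinarith [mul_self_nonneg (c i)]
end

section
/- Let A SPD in block form and P_id = [ -A_ff⁻¹A_fc ; I ]. Then the complementary coarse-grid-correction projector satisfies I - P_id(P_idᵀAP_id)⁻¹P_idᵀA = S(SᵀAS)⁻¹SᵀA = [[I, -W],[0, 0]] with W = -A_ff⁻¹A_fc, where S = [I;0]. -/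
/-!
With `S = [I; 0]` one has `SᵀAS = A_ff`, so `S(SᵀAS)⁻¹SᵀA = [[I, A_ff⁻¹A_fc], [0, 0]]` by direct
block multiplication. For `P = [W; I]`, symmetry of `A` makes the fine block of `PᵀA` vanish, so
`PᵀA = [0, Σ]` and `PᵀAP = Σ` with `Σ` the Schur complement of `A_ff`; it is invertible because
`det A = det A_ff · det Σ`. Hence `P Σ⁻¹ PᵀA = [[0, W], [0, I]]`, and `I` minus it is the same
block matrix as before.
-/

open Matrix

namespace Matrix

variable {m n R : Type*} [Fintype m] [Fintype n] [DecidableEq m] [CommRing R]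

lemma isUnit_det_schur_of_isUnit_det_fromBlocks [DecidableEq n] {Aff : Matrix m m R}
    {Afc : Matrix m n R} {Acf : Matrix n m R} {Acc : Matrix n n R} (hAff : IsUnit Aff.det)
    (hA : IsUnit (fromBlocks Aff Afc Acf Acc).det) : IsUnit (Acc - Acf * Aff⁻¹ * Afc).det := by
  let := invertibleOfIsUnitDet Aff hAff
  rw [← isUnit_iff_isUnit_det, ← invOf_eq_nonsing_inv, ← isUnit_fromBlocks_iff_of_invertible₁₁]
  exact (isUnit_iff_isUnit_det _).mpr hA

lemma transpose_fromRows_one_zero_mul_fromBlocks (Aff : Matrix m m R) (Afc : Matrix m n R)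
    (Acf : Matrix n m R) (Acc : Matrix n n R) :
    (fromRows (1 : Matrix m m R) (0 : Matrix n m R))ᵀ * fromBlocks Aff Afc Acf Acc =
      fromCols Aff Afc := by
  rw [transpose_fromRows, transpose_one, transpose_zero, fromCols_mul_fromBlocks]
  simp

lemma fromRows_one_zero_mul_inv_mul_eq_fromBlocks {Aff : Matrix m m R} (Afc : Matrix m n R)
    (Acf : Matrix n m R) (Acc : Matrix n n R) (hAff : IsUnit Aff.det) :
    let S := fromRows (1 : Matrix m m R) (0 : Matrix n m R)
    let A := fromBlocks Aff Afc Acf Acc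
    S * (Sᵀ * A * S)⁻¹ * Sᵀ * A = fromBlocks 1 (Aff⁻¹ * Afc) 0 0 := by
  intro S A
  have hSA : Sᵀ * A = fromCols Aff Afc := transpose_fromRows_one_zero_mul_fromBlocks ..
  have hSAS : Sᵀ * A * S = Aff := by simp [hSA, S, fromCols_mul_fromRows]
  rw [hSAS, Matrix.mul_assoc _ Sᵀ, hSA, fromRows_mul, fromRows_mul_fromCols]
  simp [nonsing_inv_mul Aff hAff]

lemma transpose_fromRows_neg_inv_mul_fromBlocks [DecidableEq n] {Aff : Matrix m m R}
    {Afc : Matrix m n R} {Acf : Matrix n m R} (Acc : Matrix n n R)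
    (hA : (fromBlocks Aff Afc Acf Acc).IsSymm) (hAff : IsUnit Aff.det) :
    (fromRows (-(Aff⁻¹ * Afc)) (1 : Matrix n n R))ᵀ * fromBlocks Aff Afc Acf Acc =
      fromCols 0 (Acc - Acf * Aff⁻¹ * Afc) := by
  obtain ⟨hAffT, hAfcT, -, -⟩ := isSymm_fromBlocks_iff.mp hA
  have hWT : (-(Aff⁻¹ * Afc))ᵀ = -(Acf * Aff⁻¹) := by
    rw [transpose_neg, transpose_mul, transpose_nonsing_inv, hAffT.eq, hAfcT]
  rw [transpose_fromRows, transpose_one, fromCols_mul_fromBlocks, hWT]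
  simp [Matrix.mul_assoc, nonsing_inv_mul Aff hAff, sub_eq_neg_add]

lemma fromRows_neg_inv_mul_inv_mul_eq_fromBlocks [DecidableEq n] {Aff : Matrix m m R}
    {Afc : Matrix m n R} {Acf : Matrix n m R} {Acc : Matrix n n R}
    (hA : (fromBlocks Aff Afc Acf Acc).IsSymm) (hAff : IsUnit Aff.det)
    (hSchur : IsUnit (Acc - Acf * Aff⁻¹ * Afc).det) :
    let P := fromRows (-(Aff⁻¹ * Afc)) (1 : Matrix n n R)
    let A := fromBlocks Aff Afc Acf Acc
    P * (Pᵀ * A * P)⁻¹ * Pᵀ * A = fromBlocks 0 (-(Aff⁻¹ * Afc)) 0 1 := by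
  intro P A
  have hPA : Pᵀ * A = fromCols 0 (Acc - Acf * Aff⁻¹ * Afc) :=
    transpose_fromRows_neg_inv_mul_fromBlocks Acc hA hAff
  have hPAP : Pᵀ * A * P = Acc - Acf * Aff⁻¹ * Afc := by simp [hPA, P, fromCols_mul_fromRows]
  rw [hPAP, Matrix.mul_assoc _ Pᵀ, hPA, fromRows_mul, fromRows_mul_fromCols]
  simp [nonsing_inv_mul_cancel_right _ _ hSchur, nonsing_inv_mul _ hSchur]

end Matrix

/-- For `P_id = [W; I]` with `W = -A_ff⁻¹A_fc` and `S = [I; 0]`, the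
complementary coarse-grid-correction projector satisfies
`I - P_id(P_idᵀAP_id)⁻¹P_idᵀA = S(SᵀAS)⁻¹SᵀA = [[I, -W],[0, 0]]`. -/
theorem complementary_projector_block_form {nf nc : ℕ}
    (Aff : Matrix (Fin nf) (Fin nf) ℝ) (Afc : Matrix (Fin nf) (Fin nc) ℝ)
    (Acf : Matrix (Fin nc) (Fin nf) ℝ) (Acc : Matrix (Fin nc) (Fin nc) ℝ)
    (A : Matrix (Fin nf ⊕ Fin nc) (Fin nf ⊕ Fin nc) ℝ)
    (hA : A = Matrix.fromBlocks Aff Afc Acf Acc) (hApd : A.PosDef)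
    (hAff : IsUnit Aff.det)
    (S : Matrix (Fin nf ⊕ Fin nc) (Fin nf) ℝ)
    (hS : S = Matrix.of (Sum.elim (1 : Matrix (Fin nf) (Fin nf) ℝ)
      (0 : Matrix (Fin nc) (Fin nf) ℝ)))
    (W : Matrix (Fin nf) (Fin nc) ℝ) (hW : W = -(Aff⁻¹ * Afc))
    (Pid : Matrix (Fin nf ⊕ Fin nc) (Fin nc) ℝ)
    (hPid : Pid = Matrix.of (Sum.elim W (1 : Matrix (Fin nc) (Fin nc) ℝ))) :
    1 - Pid * (Pidᵀ * A * Pid)⁻¹ * Pidᵀ * A = S * (Sᵀ * A * S)⁻¹ * Sᵀ * A ∧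
    S * (Sᵀ * A * S)⁻¹ * Sᵀ * A = Matrix.fromBlocks 1 (-W) 0 0 := by
  have hS' : S = fromRows 1 0 := hS
  have hPid' : Pid = fromRows W 1 := hPid
  subst hA hW hS' hPid'
  have hsymm : (fromBlocks Aff Afc Acf Acc).IsSymm := isHermitian_iff_isSymm.mp hApd.isHermitian
  have hSchur := isUnit_det_schur_of_isUnit_det_fromBlocks hAff
    ((isUnit_iff_isUnit_det _).mp hApd.isUnit)
  rw [fromRows_neg_inv_mul_inv_mul_eq_fromBlocks hsymm hAff hSchur,
    fromRows_one_zero_mul_inv_mul_eq_fromBlocks Afc Acf Acc hAff, neg_neg, ← fromBlocks_one,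
    sub_eq_add_neg, fromBlocks_neg, fromBlocks_add]
  simp
end

section
/- With M̃_HB as above (exact F-relaxation, M_ff = A_ff), every generalized eigenvalue of Ax = λM̃_HBx outside the first n_c equals 1; more precisely, the matrix M̃_HB⁻¹A has eigenvalue 1 with multiplicity at least n_f = n - n_c. -/
open Matrix

/-- With `M̃_HB` as in the exact F-relaxation case, the matrix `M̃_HB⁻¹A` has
eigenvalue `1` with (geometric) multiplicity at least `n_f`. -/
theorem HB_eigenvalue_one_multiplicity {nf nc : ℕ}
    (Aff : Matrix (Fin nf) (Fin nf) ℝ) (Afc : Matrix (Fin nf) (Fin nc) ℝ)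
    (Acf : Matrix (Fin nc) (Fin nf) ℝ) (Acc : Matrix (Fin nc) (Fin nc) ℝ)
    (A : Matrix (Fin nf ⊕ Fin nc) (Fin nf ⊕ Fin nc) ℝ)
    (hA : A = Matrix.fromBlocks Aff Afc Acf Acc) (hApd : A.PosDef)
    (hAff : IsUnit Aff.det) (τ : ℝ) (hτ : 0 < τ)
    (SA : Matrix (Fin nc) (Fin nc) ℝ) (hSA : SA = Acc - Acf * Aff⁻¹ * Afc)
    (MHB : Matrix (Fin nf ⊕ Fin nc) (Fin nf ⊕ Fin nc) ℝ)
    (hMHB : MHB = Matrix.fromBlocks Aff Afc Acf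
      ((τ ^ 2) • ((2 * τ) • (1 : Matrix (Fin nc) (Fin nc) ℝ) - SA)⁻¹ +
        Acf * Aff⁻¹ * Afc))
    (hMpd : MHB.PosDef) :
    nf ≤ Module.finrank ℝ (LinearMap.ker (Matrix.toLin' (MHB⁻¹ * A - 1))) := by
  have hMu : IsUnit MHB.det := (Matrix.isUnit_iff_isUnit_det _).1 hMpd.isUnit
  have hinv : MHB⁻¹ * MHB = 1 := Matrix.nonsing_inv_mul _ hMu
  have hker : ∀ x : Fin nf → ℝ,
      (Sum.elim x 0 : Fin nf ⊕ Fin nc → ℝ) ∈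
        LinearMap.ker (Matrix.toLin' (MHB⁻¹ * A - 1)) := by
    intro x
    have h1 : (A - MHB) *ᵥ Sum.elim x 0 = 0 := by
      rw [Matrix.sub_mulVec, hA, hMHB]
      simp [Matrix.fromBlocks_mulVec]
    have h2 : MHB⁻¹ * A - 1 = MHB⁻¹ * (A - MHB) := by
      rw [Matrix.mul_sub, hinv]
    simp only [LinearMap.mem_ker, Matrix.toLin'_apply, h2,
      ← Matrix.mulVec_mulVec, h1, Matrix.mulVec_zero]
  let L : (Fin nf → ℝ) →ₗ[ℝ]
      LinearMap.ker (Matrix.toLin' (MHB⁻¹ * A - 1)) :=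
    { toFun := fun x => ⟨Sum.elim x 0, hker x⟩
      map_add' := by
        intro x y
        ext (i | i) <;> simp
      map_smul' := by
        intro c x
        ext (i | i) <;> simp }
  have hinj : Function.Injective L := by
    intro x y h
    funext i
    have h' : (Sum.elim x 0 : Fin nf ⊕ Fin nc → ℝ) = Sum.elim y 0 :=
      congrArg Subtype.val h
    have := congrFun h' (Sum.inl i)
    simpa using this
  calc nf = Module.finrank ℝ (Fin nf → ℝ) := (Module.finrank_fin_fun ℝ).symm
    _ ≤ _ := LinearMap.finrank_le_finrank_of_injective hinj
end

section
/- Let M̃_HB be as above with M_ff = A_ff and let E = I - M̃_HB⁻¹A. Then EᵀA S = 0 for S = [I; 0], i.e., range(I - M̃_HB⁻¹A) is A-orthogonal to range(S). -/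
open Matrix

/-!
`M̃_HB` and `A` share their first block column, so `M̃_HB S = A S`, i.e. `M̃_HB⁻¹ A S = S`.
Writing `Eᵀ A = (M̃_HB - A) M̃_HB⁻¹ A` then gives `Eᵀ A S = (M̃_HB - A) S = 0`.
-/

namespace Matrix

variable {m n o p : Type*} {R : Type*}

theorem fromBlocks_mul_fromRows_one_zero [Fintype m] [Fintype n] [DecidableEq m] [Semiring R]
    (A : Matrix o m R) (B : Matrix o n R) (C : Matrix p m R) (D : Matrix p n R) :
    fromBlocks A B C D * fromRows (1 : Matrix m m R) (0 : Matrix n m R) = fromRows A C := by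
  simp [fromBlocks_mul_fromRows]

variable [Fintype n] [DecidableEq n] [CommRing R]

theorem transpose_one_sub_nonsing_inv_mul_mul {A M : Matrix n n R} (hA : A.IsSymm)
    (hM : M.IsSymm) (hMdet : IsUnit M.det) :
    (1 - M⁻¹ * A)ᵀ * A = (M - A) * M⁻¹ * A := by
  rw [transpose_sub, transpose_one, transpose_mul, transpose_nonsing_inv, hA.eq, hM.eq,
    Matrix.sub_mul, Matrix.sub_mul, Matrix.sub_mul, mul_nonsing_inv M hMdet, Matrix.one_mul]

theorem transpose_one_sub_nonsing_inv_mul_mul_mul_eq_zero {A M : Matrix n n R}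
    (hA : A.IsSymm) (hM : M.IsSymm) (hMdet : IsUnit M.det) {S : Matrix n m R}
    (hMS : M * S = A * S) :
    (1 - M⁻¹ * A)ᵀ * A * S = 0 := by
  have hMinvAS : M⁻¹ * (A * S) = S := by
    rw [← hMS, ← Matrix.mul_assoc, nonsing_inv_mul M hMdet, Matrix.one_mul]
  rw [transpose_one_sub_nonsing_inv_mul_mul hA hM hMdet, Matrix.mul_assoc, Matrix.mul_assoc, hMinvAS,
    Matrix.sub_mul, hMS, sub_self]

end Matrix

theorem HB_error_A_orthogonal_to_S_general {nf nc : ℕ}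
    (Aff : Matrix (Fin nf) (Fin nf) ℝ) (Afc : Matrix (Fin nf) (Fin nc) ℝ)
    (Acf : Matrix (Fin nc) (Fin nf) ℝ) (Acc : Matrix (Fin nc) (Fin nc) ℝ)
    (A : Matrix (Fin nf ⊕ Fin nc) (Fin nf ⊕ Fin nc) ℝ)
    (hA : A = Matrix.fromBlocks Aff Afc Acf Acc) (hApd : A.PosDef)
    (τ : ℝ)
    (SA : Matrix (Fin nc) (Fin nc) ℝ)
    (MHB : Matrix (Fin nf ⊕ Fin nc) (Fin nf ⊕ Fin nc) ℝ)
    (hMHB : MHB = Matrix.fromBlocks Aff Afc Acf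
      ((τ ^ 2) • ((2 * τ) • (1 : Matrix (Fin nc) (Fin nc) ℝ) - SA)⁻¹ +
        Acf * Aff⁻¹ * Afc))
    (hMpd : MHB.PosDef)
    (S : Matrix (Fin nf ⊕ Fin nc) (Fin nf) ℝ)
    (hS : S = Matrix.of (Sum.elim (1 : Matrix (Fin nf) (Fin nf) ℝ)
      (0 : Matrix (Fin nc) (Fin nf) ℝ))) :
    (1 - MHB⁻¹ * A)ᵀ * A * S = 0 := by
  have hMS : MHB * S = A * S := by
    rw [hMHB, hA, hS]
    exact (fromBlocks_mul_fromRows_one_zero ..).trans (fromBlocks_mul_fromRows_one_zero ..).symm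
  exact transpose_one_sub_nonsing_inv_mul_mul_mul_eq_zero
    (isHermitian_iff_isSymm.mp hApd.isHermitian) (isHermitian_iff_isSymm.mp hMpd.isHermitian)
    ((isUnit_iff_isUnit_det _).mp hMpd.isUnit) hMS

/-- With `M̃_HB` as above (`M_ff = A_ff`) and `E = I - M̃_HB⁻¹A`, one has
`Eᵀ A S = 0` for `S = [I; 0]`: `range(I - M̃_HB⁻¹A)` is `A`-orthogonal to
`range(S)`. -/
theorem HB_error_A_orthogonal_to_S {nf nc : ℕ}
    (Aff : Matrix (Fin nf) (Fin nf) ℝ) (Afc : Matrix (Fin nf) (Fin nc) ℝ)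
    (Acf : Matrix (Fin nc) (Fin nf) ℝ) (Acc : Matrix (Fin nc) (Fin nc) ℝ)
    (A : Matrix (Fin nf ⊕ Fin nc) (Fin nf ⊕ Fin nc) ℝ)
    (hA : A = Matrix.fromBlocks Aff Afc Acf Acc) (hApd : A.PosDef)
    (hAff : IsUnit Aff.det) (τ : ℝ) (hτ : 0 < τ)
    (SA : Matrix (Fin nc) (Fin nc) ℝ) (hSA : SA = Acc - Acf * Aff⁻¹ * Afc)
    (MHB : Matrix (Fin nf ⊕ Fin nc) (Fin nf ⊕ Fin nc) ℝ)
    (hMHB : MHB = Matrix.fromBlocks Aff Afc Acf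
      ((τ ^ 2) • ((2 * τ) • (1 : Matrix (Fin nc) (Fin nc) ℝ) - SA)⁻¹ +
        Acf * Aff⁻¹ * Afc))
    (hMpd : MHB.PosDef)
    (S : Matrix (Fin nf ⊕ Fin nc) (Fin nf) ℝ)
    (hS : S = Matrix.of (Sum.elim (1 : Matrix (Fin nf) (Fin nf) ℝ)
      (0 : Matrix (Fin nc) (Fin nf) ℝ))) :
    (1 - MHB⁻¹ * A)ᵀ * A * S = 0 :=
  HB_error_A_orthogonal_to_S_general Aff Afc Acf Acc A hA hApd τ SA MHB hMHB hMpd S hS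
end

section
/- Let A, M̃, X be SPD with (M̃v, v) ≤ σ(Xv, v) for all v. Let P be full rank and R satisfy RP = I. Then ‖(I - Π_{M̃}(P))v‖²_{M̃} ≤ σ‖(I - PR)v‖²_X for all v, where Π_{M̃}(P) is the M̃-orthogonal projection onto range(P). Consequently, if sup_v ‖(I-PR)v‖²_X/‖v‖²_A ≤ η then the two-grid convergence measure satisfies sup_v ‖(I-Π_{M̃}(P))v‖²_{M̃}/‖v‖²_A ≤ ση. -/
/-!
Write `E = I - Π_M̃(P)` and `S = PᵀM̃P`, which is positive definite because `RP = I` makes `P`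
injective. Since `EP = 0`, `Ev = E(v - Py)` for every `y`, and `EᵀM̃E = M̃ - (PᵀM̃)ᵀS⁻¹(PᵀM̃)`
shows that `E` is an `M̃`-contraction; with `y = Rv` this gives
`‖Ev‖²_M̃ ≤ ‖(I - PR)v‖²_M̃ ≤ σ‖(I - PR)v‖²_X`. Dividing by `‖v‖²_A > 0` gives the bound on the
two-grid measure, where `σ ≥ 0` because `M̃` and `X` are positive definite.
-/

open Matrix

namespace Matrix

variable {m n : Type*} [Fintype m] [Fintype n]

theorem dotProduct_transpose_mul_mul_mulVec {α : Type*} [CommSemiring α]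
    (B : Matrix m n α) (C : Matrix m m α) (w : n → α) :
    w ⬝ᵥ (Bᵀ * C * B) *ᵥ w = (B *ᵥ w) ⬝ᵥ C *ᵥ (B *ᵥ w) := by
  rw [Matrix.mul_assoc, ← mulVec_mulVec, dotProduct_mulVec, vecMul_transpose, mulVec_mulVec]

variable [DecidableEq m]

theorem inv_transpose_mul_mul_mul_cancel {k : Type*} [Fintype k] {M : Matrix n n ℝ}
    {P : Matrix n m ℝ} (hS : IsUnit (Pᵀ * M * P).det) (Z : Matrix m k ℝ) :
    (Pᵀ * M * P)⁻¹ * (Pᵀ * (M * (P * Z))) = Z := by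
  rw [← Matrix.mul_assoc M, ← Matrix.mul_assoc Pᵀ, ← Matrix.mul_assoc Pᵀ M P, ← Matrix.mul_assoc,
    nonsing_inv_mul _ hS, Matrix.one_mul]

theorem PosDef.transpose_mul_mul_of_mul_eq_one {M : Matrix n n ℝ} {P : Matrix n m ℝ}
    {R : Matrix m n ℝ} (hM : M.PosDef) (hRP : R * P = 1) : (Pᵀ * M * P).PosDef := by
  have hP : Function.Injective P.mulVec :=
    Function.LeftInverse.injective (g := R.mulVec) fun x => by
      rw [mulVec_mulVec, hRP, one_mulVec]
  simpa using hM.conjTranspose_mul_mul_same hP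

variable [DecidableEq n]

/-- `I - Π_M(P)`, where `Π_M(P) = P (PᵀMP)⁻¹ PᵀM` is the `M`-orthogonal projection onto the
range of `P`. -/
noncomputable def orthProjCompl (M : Matrix n n ℝ) (P : Matrix n m ℝ) : Matrix n n ℝ :=
  1 - P * (Pᵀ * M * P)⁻¹ * Pᵀ * M

variable {M : Matrix n n ℝ} {P : Matrix n m ℝ}

theorem orthProjCompl_mul_self (hS : IsUnit (Pᵀ * M * P).det) : orthProjCompl M P * P = 0 := by
  rw [orthProjCompl, Matrix.sub_mul, Matrix.one_mul, Matrix.mul_assoc _ M P,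
    Matrix.mul_assoc _ Pᵀ, ← Matrix.mul_assoc Pᵀ M P, Matrix.mul_assoc P, nonsing_inv_mul _ hS,
    Matrix.mul_one, sub_self]

theorem transpose_mul_mul_orthProjCompl (hM : M.IsHermitian) (hS : IsUnit (Pᵀ * M * P).det) :
    (orthProjCompl M P)ᵀ * M * orthProjCompl M P =
      M - (Pᵀ * M)ᵀ * (Pᵀ * M * P)⁻¹ * (Pᵀ * M) := by
  have hMt : Mᵀ = M := hM
  have hSt : ((Pᵀ * M * P)⁻¹)ᵀ = (Pᵀ * M * P)⁻¹ := by
    rw [transpose_nonsing_inv, transpose_mul, transpose_mul, transpose_transpose, hMt,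
      Matrix.mul_assoc]
  have hcancel (Z : Matrix m n ℝ) := inv_transpose_mul_mul_mul_cancel hS Z
  rw [orthProjCompl]
  -- opaque `S`, so that `mul_assoc` below does not reassociate inside it
  set S := Pᵀ * M * P
  simp only [transpose_sub, transpose_one, transpose_mul, transpose_transpose, hMt,
    hSt, Matrix.sub_mul, Matrix.mul_sub, Matrix.one_mul, Matrix.mul_one, Matrix.mul_assoc,
    hcancel]
  abel

theorem orthProjCompl_quadForm_le (hM : M.IsHermitian) (hS : (Pᵀ * M * P).PosDef) (w : n → ℝ) :
    (orthProjCompl M P *ᵥ w) ⬝ᵥ M *ᵥ (orthProjCompl M P *ᵥ w) ≤ w ⬝ᵥ M *ᵥ w := by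
  have hunit : IsUnit (Pᵀ * M * P).det := isUnit_iff_ne_zero.mpr hS.det_pos.ne'
  have hcorr : 0 ≤ w ⬝ᵥ ((Pᵀ * M)ᵀ * (Pᵀ * M * P)⁻¹ * (Pᵀ * M)) *ᵥ w := by
    rw [dotProduct_transpose_mul_mul_mulVec]
    simpa using hS.posSemidef.inv.dotProduct_mulVec_nonneg ((Pᵀ * M) *ᵥ w)
  rw [← dotProduct_transpose_mul_mul_mulVec, transpose_mul_mul_orthProjCompl hM hunit,
    sub_mulVec, dotProduct_sub]
  linarith

theorem orthProjCompl_quadForm_le_sub_mulVec (hM : M.IsHermitian) (hS : (Pᵀ * M * P).PosDef)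
    (v : n → ℝ) (y : m → ℝ) :
    (orthProjCompl M P *ᵥ v) ⬝ᵥ M *ᵥ (orthProjCompl M P *ᵥ v) ≤
      (v - P *ᵥ y) ⬝ᵥ M *ᵥ (v - P *ᵥ y) := by
  have hunit : IsUnit (Pᵀ * M * P).det := isUnit_iff_ne_zero.mpr hS.det_pos.ne'
  have hshift : orthProjCompl M P *ᵥ (v - P *ᵥ y) = orthProjCompl M P *ᵥ v := by
    rw [mulVec_sub, mulVec_mulVec, orthProjCompl_mul_self hunit, zero_mulVec, sub_zero]
  simpa only [hshift] using orthProjCompl_quadForm_le hM hS (v - P *ᵥ y)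

theorem orthProjCompl_quadForm_le_one_sub_mul (hM : M.PosDef) {R : Matrix m n ℝ}
    (hRP : R * P = 1) (v : n → ℝ) :
    (orthProjCompl M P *ᵥ v) ⬝ᵥ M *ᵥ (orthProjCompl M P *ᵥ v) ≤
      ((1 - P * R) *ᵥ v) ⬝ᵥ M *ᵥ ((1 - P * R) *ᵥ v) := by
  rw [sub_mulVec, one_mulVec, ← mulVec_mulVec]
  exact orthProjCompl_quadForm_le_sub_mulVec hM.isHermitian
    (hM.transpose_mul_mul_of_mul_eq_one hRP) v (R *ᵥ v)

end Matrix

theorem weak_approximation_transfer_general {n nc : ℕ}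
    (A Mt X : Matrix (Fin n) (Fin n) ℝ)
    (hA : A.PosDef) (hMt : Mt.PosDef) (hX : X.PosDef) (σ : ℝ)
    (hσ : ∀ v : Fin n → ℝ, v ⬝ᵥ Mt.mulVec v ≤ σ * (v ⬝ᵥ X.mulVec v))
    (P : Matrix (Fin n) (Fin nc) ℝ)
    (R : Matrix (Fin nc) (Fin n) ℝ) (hRP : R * P = 1) :
    (∀ v : Fin n → ℝ,
      ((1 - P * (Pᵀ * Mt * P)⁻¹ * Pᵀ * Mt).mulVec v) ⬝ᵥ
          Mt.mulVec ((1 - P * (Pᵀ * Mt * P)⁻¹ * Pᵀ * Mt).mulVec v)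
        ≤ σ * (((1 - P * R).mulVec v) ⬝ᵥ X.mulVec ((1 - P * R).mulVec v))) ∧
    (∀ η : ℝ,
      (∀ v : Fin n → ℝ, v ≠ 0 →
        (((1 - P * R).mulVec v) ⬝ᵥ X.mulVec ((1 - P * R).mulVec v)) /
          (v ⬝ᵥ A.mulVec v) ≤ η) →
      ∀ v : Fin n → ℝ, v ≠ 0 →
        (((1 - P * (Pᵀ * Mt * P)⁻¹ * Pᵀ * Mt).mulVec v) ⬝ᵥ
            Mt.mulVec ((1 - P * (Pᵀ * Mt * P)⁻¹ * Pᵀ * Mt).mulVec v)) /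
          (v ⬝ᵥ A.mulVec v) ≤ σ * η) := by
  have energy (v : Fin n → ℝ) :
      (orthProjCompl Mt P *ᵥ v) ⬝ᵥ Mt *ᵥ (orthProjCompl Mt P *ᵥ v) ≤
        σ * (((1 - P * R) *ᵥ v) ⬝ᵥ X *ᵥ ((1 - P * R) *ᵥ v)) :=
    (orthProjCompl_quadForm_le_one_sub_mul hMt hRP v).trans (hσ _)
  refine ⟨energy, fun η hη v hv => ?_⟩
  have hσ_pos : 0 < σ := by
    have hMv : 0 < v ⬝ᵥ Mt *ᵥ v := by simpa using hMt.dotProduct_mulVec_pos hv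
    have hXv : 0 < v ⬝ᵥ X *ᵥ v := by simpa using hX.dotProduct_mulVec_pos hv
    exact pos_of_mul_pos_left (hMv.trans_le (hσ v)) hXv.le
  have hAv : 0 ≤ v ⬝ᵥ A *ᵥ v := by simpa using (hA.dotProduct_mulVec_pos hv).le
  set e := ((1 - P * R) *ᵥ v) ⬝ᵥ X *ᵥ ((1 - P * R) *ᵥ v)
  calc _ ≤ σ * e / (v ⬝ᵥ A *ᵥ v) := div_le_div_of_nonneg_right (energy v) hAv
    _ = σ * (e / (v ⬝ᵥ A *ᵥ v)) := mul_div_assoc _ _ _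
    _ ≤ σ * η := mul_le_mul_of_nonneg_left (hη v hv) hσ_pos.le

/-- If `vᵀM̃v ≤ σ vᵀXv` for all `v`, `P` is full rank and `RP = I`, then
`‖(I - Π_M̃(P))v‖²_M̃ ≤ σ‖(I - PR)v‖²_X` for all `v`; consequently, if
`sup_v ‖(I-PR)v‖²_X/‖v‖²_A ≤ η` then `sup_v ‖(I-Π_M̃(P))v‖²_M̃/‖v‖²_A ≤ ση`. -/
theorem weak_approximation_transfer {n nc : ℕ}
    (A Mt X : Matrix (Fin n) (Fin n) ℝ)
    (hA : A.PosDef) (hMt : Mt.PosDef) (hX : X.PosDef) (σ : ℝ)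
    (hσ : ∀ v : Fin n → ℝ, v ⬝ᵥ Mt.mulVec v ≤ σ * (v ⬝ᵥ X.mulVec v))
    (P : Matrix (Fin n) (Fin nc) ℝ) (hP : P.rank = nc)
    (R : Matrix (Fin nc) (Fin n) ℝ) (hRP : R * P = 1) :
    (∀ v : Fin n → ℝ,
      ((1 - P * (Pᵀ * Mt * P)⁻¹ * Pᵀ * Mt).mulVec v) ⬝ᵥ
          Mt.mulVec ((1 - P * (Pᵀ * Mt * P)⁻¹ * Pᵀ * Mt).mulVec v)
        ≤ σ * (((1 - P * R).mulVec v) ⬝ᵥ X.mulVec ((1 - P * R).mulVec v))) ∧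
    (∀ η : ℝ,
      (∀ v : Fin n → ℝ, v ≠ 0 →
        (((1 - P * R).mulVec v) ⬝ᵥ X.mulVec ((1 - P * R).mulVec v)) /
          (v ⬝ᵥ A.mulVec v) ≤ η) →
      ∀ v : Fin n → ℝ, v ≠ 0 →
        (((1 - P * (Pᵀ * Mt * P)⁻¹ * Pᵀ * Mt).mulVec v) ⬝ᵥ
            Mt.mulVec ((1 - P * (Pᵀ * Mt * P)⁻¹ * Pᵀ * Mt).mulVec v)) /
          (v ⬝ᵥ A.mulVec v) ≤ σ * η) :=
  weak_approximation_transfer_general A Mt X hA hMt hX σ hσ P R hRP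
end

section
/- Let A, X be SPD, R ∈ ℝ^{n_c×n} and S ∈ ℝ^{n×n_f} (n_f = n - n_c) full rank with RS = 0. For P_id = (I - S(SᵀAS)⁻¹SᵀA)Z with Z full rank and RZ = I, the minimum over all P with RP = I of sup_v ‖(I-PR)v‖²_X/‖v‖²_A equals 1/λ_min((SᵀXS)⁻¹(SᵀAS)). -/
open Matrix

/-! For the ideal interpolation, `(I - P_id R) v = S u` with `u = (SᵀAS)⁻¹SᵀAv`: since
`range S = ker R`, this is the `A`-orthogonal (Galerkin) projection of `v` onto `ker R`, so
`uᵀ(SᵀAS)u ≤ vᵀAv`, and `‖S u‖²_X = uᵀ(SᵀXS)u ≤ uᵀ(SᵀAS)u / λ_min` by the generalized Rayleigh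
bound. Conversely `I - PR` is the identity on `ker R` for every `P` with `RP = I`, so the
generalized eigenvector `S w₀` for `λ_min` gives the ratio `1/λ_min` whatever `P` is. -/

namespace Matrix

section Field

variable {K : Type*} [Field K] {l m n : Type*} [Fintype l] [Fintype n]

theorem mulVec_injective_of_rank_eq_card {S : Matrix m l K} (hS : S.rank = Fintype.card l) :
    Function.Injective S.mulVec := by
  have h := LinearMap.finrank_range_add_finrank_ker S.mulVecLin
  rw [Module.finrank_fintype_fun_eq_card, ← rank, hS, add_eq_left,
    Submodule.finrank_eq_zero] at h
  exact LinearMap.ker_eq_bot.mp h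

theorem range_mulVecLin_eq_ker_of_rank_add_rank {R : Matrix m n K} {S : Matrix n l K}
    (hRS : R * S = 0) (hrank : R.rank + S.rank = Fintype.card n) :
    LinearMap.range S.mulVecLin = LinearMap.ker R.mulVecLin := by
  have hle : LinearMap.range S.mulVecLin ≤ LinearMap.ker R.mulVecLin := by
    rw [LinearMap.range_le_ker_iff, ← mulVecLin_mul, hRS, mulVecLin_zero]
  refine Submodule.eq_of_le_of_finrank_le hle ?_
  have h := LinearMap.finrank_range_add_finrank_ker R.mulVecLin
  rw [Module.finrank_fintype_fun_eq_card, ← rank] at h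
  change _ ≤ S.rank
  omega

theorem mulVec_eq_self_of_mulVec_eq_zero {Q : Matrix n n K} {S : Matrix n l K}
    {R : Matrix m n K} (hQS : Q * S = S)
    (hker : LinearMap.range S.mulVecLin = LinearMap.ker R.mulVecLin) {x : n → K}
    (hx : R *ᵥ x = 0) : Q *ᵥ x = x := by
  obtain ⟨t, rfl⟩ : x ∈ LinearMap.range S.mulVecLin := hker ▸ hx
  simp only [mulVecLin_apply, mulVec_mulVec, hQS]

theorem one_sub_one_sub_mul_mul_mulVec_eq [Fintype m] [DecidableEq m] [DecidableEq n]
    {Q : Matrix n n K} {R : Matrix m n K} {Z : Matrix n m K}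
    (hRZ : R * Z = 1) (hQ : ∀ x, R *ᵥ x = 0 → Q *ᵥ x = x) (v : n → K) :
    (1 - ((1 - Q) * Z) * R) *ᵥ v = Q *ᵥ v := by
  have hker : R *ᵥ (v - Z *ᵥ (R *ᵥ v)) = 0 := by
    rw [mulVec_sub, mulVec_mulVec, hRZ, one_mulVec, sub_self]
  calc (1 - ((1 - Q) * Z) * R) *ᵥ v
      = (v - Z *ᵥ (R *ᵥ v)) + Q *ᵥ (Z *ᵥ (R *ᵥ v)) := by
        simp only [sub_mulVec, one_mulVec, ← mulVec_mulVec]; abel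
    _ = Q *ᵥ v := by rw [← hQ _ hker, ← mulVec_add, sub_add_cancel]

theorem ideal_interpolation_error_mulVec_eq [Fintype m] [DecidableEq m] [DecidableEq l]
    [DecidableEq n] {A : Matrix n n K} {R : Matrix m n K} {S : Matrix n l K} {Z : Matrix n m K}
    (hC : IsUnit (Sᵀ * A * S).det)
    (hker : LinearMap.range S.mulVecLin = LinearMap.ker R.mulVecLin) (hRZ : R * Z = 1)
    (v : n → K) :
    (1 - ((1 - S * (Sᵀ * A * S)⁻¹ * Sᵀ * A) * Z) * R) *ᵥ v
      = S *ᵥ ((Sᵀ * A * S)⁻¹ *ᵥ (Sᵀ *ᵥ (A *ᵥ v))) := by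
  have hQS : S * (Sᵀ * A * S)⁻¹ * Sᵀ * A * S = S := by
    rw [show S * (Sᵀ * A * S)⁻¹ * Sᵀ * A * S = S * ((Sᵀ * A * S)⁻¹ * (Sᵀ * A * S)) by
        simp only [Matrix.mul_assoc],
      nonsing_inv_mul _ hC, Matrix.mul_one]
  rw [one_sub_one_sub_mul_mul_mulVec_eq hRZ
    fun x hx => mulVec_eq_self_of_mulVec_eq_zero hQS hker hx]
  simp only [mulVec_mulVec, Matrix.mul_assoc]

theorem one_sub_mul_mulVec_mulVec_eq [Fintype m] [DecidableEq n] {R : Matrix m n K}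
    {S : Matrix n l K} (hRS : R * S = 0) (P : Matrix n m K) (w : l → K) :
    (1 - P * R) *ᵥ (S *ᵥ w) = S *ᵥ w := by
  rw [sub_mulVec, one_mulVec, mulVec_mulVec, Matrix.mul_assoc, hRS, Matrix.mul_zero,
    zero_mulVec, sub_zero]

end Field

variable {m n : Type*} [Fintype m] [Fintype n]

theorem mulVec_dotProduct_mulVec_mulVec {R : Type*} [CommSemiring R]
    (S : Matrix m n R) (A : Matrix m m R) (x y : n → R) :
    S *ᵥ x ⬝ᵥ A *ᵥ (S *ᵥ y) = x ⬝ᵥ (Sᵀ * A * S) *ᵥ y := by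
  rw [← mulVec_mulVec, ← mulVec_mulVec, mulVec_transpose, dotProduct_comm x,
    ← dotProduct_mulVec, dotProduct_comm]

theorem IsHermitian.dotProduct_mulVec_comm {A : Matrix m m ℝ} (hA : A.IsHermitian)
    (x y : m → ℝ) : x ⬝ᵥ A *ᵥ y = y ⬝ᵥ A *ᵥ x := by
  rw [dotProduct_mulVec, ← mulVec_transpose, ← conjTranspose_eq_transpose_of_trivial, hA.eq,
    dotProduct_comm]

theorem PosSemidef.dotProduct_mulVec_le_of_galerkin {A : Matrix m m ℝ} (hA : A.PosSemidef)
    {S : Matrix m n ℝ} {u : n → ℝ} {v : m → ℝ}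
    (h : Sᵀ *ᵥ (A *ᵥ (S *ᵥ u)) = Sᵀ *ᵥ (A *ᵥ v)) :
    S *ᵥ u ⬝ᵥ A *ᵥ (S *ᵥ u) ≤ v ⬝ᵥ A *ᵥ v := by
  set e := S *ᵥ u
  have horth : e ⬝ᵥ A *ᵥ (v - e) = 0 := by
    rw [dotProduct_comm, dotProduct_mulVec, ← mulVec_transpose, mulVec_sub, mulVec_sub, h,
      sub_self, zero_dotProduct]
  have hsplit : v ⬝ᵥ A *ᵥ v
      = e ⬝ᵥ A *ᵥ e + 2 * (e ⬝ᵥ A *ᵥ (v - e)) + (v - e) ⬝ᵥ A *ᵥ (v - e) := by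
    have := hA.isHermitian.dotProduct_mulVec_comm e (v - e)
    simp only [mulVec_sub, dotProduct_sub, sub_dotProduct] at this ⊢
    linarith
  have hrest : 0 ≤ (v - e) ⬝ᵥ A *ᵥ (v - e) := by
    simpa using hA.dotProduct_mulVec_nonneg (v - e)
  rw [hsplit, horth]
  linarith

theorem IsHermitian.mul_dotProduct_self_le_of_le_eigenvalues [DecidableEq n]
    {M : Matrix n n ℝ} (hM : M.IsHermitian) {c : ℝ}
    (hc : ∀ μ (y : n → ℝ), y ≠ 0 → M *ᵥ y = μ • y → c ≤ μ) (x : n → ℝ) :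
    c * (x ⬝ᵥ x) ≤ x ⬝ᵥ M *ᵥ x := by
  have hH : (M - c • 1).IsHermitian := hM.sub (isHermitian_one.smul rfl)
  have hpsd : (M - c • 1).PosSemidef := by
    refine hH.posSemidef_iff_eigenvalues_nonneg.mpr fun i => ?_
    have hne : ⇑(hH.eigenvectorBasis i) ≠ 0 := fun h0 =>
      hH.eigenvectorBasis.orthonormal.ne_zero i (by ext j; exact congrFun h0 j)
    have hev : M *ᵥ ⇑(hH.eigenvectorBasis i)
        = (hH.eigenvalues i + c) • ⇑(hH.eigenvectorBasis i) := by
      rw [add_smul, ← hH.mulVec_eigenvectorBasis i, sub_mulVec, smul_mulVec, one_mulVec,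
        sub_add_cancel]
    have := hc _ _ hne hev
    simp only [Pi.zero_apply]
    linarith
  have := hpsd.dotProduct_mulVec_nonneg x
  rw [star_trivial, sub_mulVec, smul_mulVec, one_mulVec, dotProduct_sub, dotProduct_smul,
    smul_eq_mul] at this
  linarith

theorem PosDef.pos_of_mulVec_eq_smul_mulVec {B C : Matrix n n ℝ} (hB : B.PosDef)
    (hC : C.PosDef) {μ : ℝ} {w : n → ℝ} (hw : w ≠ 0) (h : C *ᵥ w = μ • B *ᵥ w) : 0 < μ := by
  have hCw := hC.dotProduct_mulVec_pos hw
  rw [star_trivial, h, dotProduct_smul, smul_eq_mul] at hCw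
  exact pos_of_mul_pos_left hCw (by simpa using (hB.dotProduct_mulVec_pos hw).le)

open scoped MatrixOrder in
theorem PosDef.mul_dotProduct_mulVec_le_of_le_generalized_eigenvalues [DecidableEq n]
    {B C : Matrix n n ℝ} (hB : B.PosDef) (hC : C.IsHermitian) {c : ℝ}
    (hc : ∀ μ (w : n → ℝ), w ≠ 0 → C *ᵥ w = μ • B *ᵥ w → c ≤ μ) (w : n → ℝ) :
    c * (w ⬝ᵥ B *ᵥ w) ≤ w ⬝ᵥ C *ᵥ w := by
  -- reduce to the standard eigenvalue problem for `M = B^{-1/2} C B^{-1/2}`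
  set T := CFC.sqrt B
  have hTT : T * T = B := CFC.sqrt_mul_sqrt_self B hB.posSemidef.nonneg
  have hT : Tᵀ = T := by
    rw [← conjTranspose_eq_transpose_of_trivial, (CFC.sqrt_nonneg B).posSemidef.isHermitian.eq]
  have hTunit : IsUnit T.det := by
    rw [← isUnit_iff_isUnit_det, CFC.isUnit_sqrt_iff B hB.posSemidef.nonneg]
    exact hB.isUnit
  set M := T⁻¹ * C * T⁻¹
  have hM : M.IsHermitian := by
    have := isHermitian_conjTranspose_mul_mul T⁻¹ hC
    rwa [conjTranspose_nonsing_inv, conjTranspose_eq_transpose_of_trivial, hT] at this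
  have hMT : Tᵀ * M * T = C := by
    rw [hT, show T * M * T = (T * T⁻¹) * C * (T⁻¹ * T) by simp only [M, Matrix.mul_assoc],
      mul_nonsing_inv T hTunit, nonsing_inv_mul T hTunit, Matrix.one_mul, Matrix.mul_one]
  have hMc : ∀ μ (y : n → ℝ), y ≠ 0 → M *ᵥ y = μ • y → c ≤ μ := by
    intro μ y hy hMy
    refine hc μ (T⁻¹ *ᵥ y) (fun h0 => hy ?_) ?_
    · rw [← one_mulVec y, ← mul_nonsing_inv T hTunit, ← mulVec_mulVec, h0, mulVec_zero]
    · calc C *ᵥ (T⁻¹ *ᵥ y) = T *ᵥ (M *ᵥ y) := by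
            simp only [M, mulVec_mulVec, ← Matrix.mul_assoc, mul_nonsing_inv T hTunit,
              Matrix.one_mul]
        _ = μ • B *ᵥ (T⁻¹ *ᵥ y) := by
            rw [hMy, mulVec_smul, ← hTT, mulVec_mulVec, Matrix.mul_assoc,
              mul_nonsing_inv T hTunit, Matrix.mul_one]
  have hTw : T *ᵥ w ⬝ᵥ T *ᵥ w = w ⬝ᵥ B *ᵥ w := by
    simpa [hT, hTT] using mulVec_dotProduct_mulVec_mulVec T 1 w w
  have := hM.mul_dotProduct_self_le_of_le_eigenvalues hMc (T *ᵥ w)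
  rwa [mulVec_dotProduct_mulVec_mulVec, hMT, hTw] at this

end Matrix

theorem ideal_interpolation_minimizes_measure_general {n nc nf : ℕ} (h : nc + nf = n)
    (A X : Matrix (Fin n) (Fin n) ℝ) (hA : A.PosDef) (hX : X.PosDef)
    (R : Matrix (Fin nc) (Fin n) ℝ) (hR : R.rank = nc)
    (S : Matrix (Fin n) (Fin nf) ℝ) (hSrank : S.rank = nf) (hRS : R * S = 0)
    (lmin : ℝ)
    (hlmin : IsLeast {μ : ℝ | ∃ w : Fin nf → ℝ, w ≠ 0 ∧
      (Sᵀ * A * S).mulVec w = μ • (Sᵀ * X * S).mulVec w} lmin)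
    (Z : Matrix (Fin n) (Fin nc) ℝ) (hRZ : R * Z = 1) :
    (∀ v : Fin n → ℝ, v ≠ 0 →
      (((1 - ((1 - S * (Sᵀ * A * S)⁻¹ * Sᵀ * A) * Z) * R).mulVec v) ⬝ᵥ
          X.mulVec ((1 - ((1 - S * (Sᵀ * A * S)⁻¹ * Sᵀ * A) * Z) * R).mulVec v)) /
        (v ⬝ᵥ A.mulVec v) ≤ 1 / lmin) ∧
    (∀ P : Matrix (Fin n) (Fin nc) ℝ, R * P = 1 →
      ∃ v : Fin n → ℝ, v ≠ 0 ∧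
        1 / lmin ≤ (((1 - P * R).mulVec v) ⬝ᵥ
            X.mulVec ((1 - P * R).mulVec v)) / (v ⬝ᵥ A.mulVec v)) := by
  have hSinj := mulVec_injective_of_rank_eq_card (S := S) (by simpa using hSrank)
  have hker := range_mulVecLin_eq_ker_of_rank_add_rank hRS (by simpa [hR, hSrank] using h)
  set C := Sᵀ * A * S
  set B := Sᵀ * X * S
  have hC : C.PosDef := by simpa using hA.conjTranspose_mul_mul_same hSinj
  have hB : B.PosDef := by simpa using hX.conjTranspose_mul_mul_same hSinj
  have hCunit : IsUnit C.det := (isUnit_iff_isUnit_det C).mp hC.isUnit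
  have hray := hB.mul_dotProduct_mulVec_le_of_le_generalized_eigenvalues hC.isHermitian
    fun μ w hw hμ => hlmin.2 ⟨w, hw, hμ⟩
  obtain ⟨w₀, hw₀, hCw₀⟩ := hlmin.1
  have hBw₀ : 0 < w₀ ⬝ᵥ B *ᵥ w₀ := by simpa using hB.dotProduct_mulVec_pos hw₀
  have hlmin_pos : 0 < lmin := hB.pos_of_mulVec_eq_smul_mulVec hC hw₀ hCw₀
  constructor
  · intro v hv
    set u := C⁻¹ *ᵥ (Sᵀ *ᵥ (A *ᵥ v))
    have hCu : C *ᵥ u = Sᵀ *ᵥ (A *ᵥ v) := by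
      rw [mulVec_mulVec, mul_nonsing_inv C hCunit, one_mulVec]
    have hgalerkin : u ⬝ᵥ C *ᵥ u ≤ v ⬝ᵥ A *ᵥ v := by
      rw [← mulVec_dotProduct_mulVec_mulVec]
      refine hA.posSemidef.dotProduct_mulVec_le_of_galerkin ?_
      rwa [mulVec_mulVec, mulVec_mulVec]
    have hvA : 0 < v ⬝ᵥ A *ᵥ v := by simpa using hA.dotProduct_mulVec_pos hv
    rw [ideal_interpolation_error_mulVec_eq hCunit hker hRZ, mulVec_dotProduct_mulVec_mulVec,
      div_le_div_iff₀ hvA hlmin_pos]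
    linarith [hray u]
  · intro P _
    refine ⟨S *ᵥ w₀, fun h0 => hw₀ (hSinj (h0.trans (mulVec_zero S).symm)), ?_⟩
    rw [one_sub_mul_mulVec_mulVec_eq hRS, mulVec_dotProduct_mulVec_mulVec,
      mulVec_dotProduct_mulVec_mulVec, hCw₀, dotProduct_smul, smul_eq_mul, mul_comm, ← div_div,
      div_self hBw₀.ne']

/-- The minimum over all `P` with `RP = I` of `μ_X(PR) = sup_v ‖(I-PR)v‖²_X/‖v‖²_A`
equals `1/λ_min((SᵀXS)⁻¹(SᵀAS))`, attained by the ideal interpolation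
`P_id = (I - S(SᵀAS)⁻¹SᵀA)Z` with `RZ = I`. -/
theorem ideal_interpolation_minimizes_measure {n nc nf : ℕ} (h : nc + nf = n)
    (A X : Matrix (Fin n) (Fin n) ℝ) (hA : A.PosDef) (hX : X.PosDef)
    (R : Matrix (Fin nc) (Fin n) ℝ) (hR : R.rank = nc)
    (S : Matrix (Fin n) (Fin nf) ℝ) (hSrank : S.rank = nf) (hRS : R * S = 0)
    (lmin : ℝ)
    (hlmin : IsLeast {μ : ℝ | ∃ w : Fin nf → ℝ, w ≠ 0 ∧
      (Sᵀ * A * S).mulVec w = μ • (Sᵀ * X * S).mulVec w} lmin)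
    (Z : Matrix (Fin n) (Fin nc) ℝ) (hZ : Z.rank = nc) (hRZ : R * Z = 1) :
    (∀ v : Fin n → ℝ, v ≠ 0 →
      (((1 - ((1 - S * (Sᵀ * A * S)⁻¹ * Sᵀ * A) * Z) * R).mulVec v) ⬝ᵥ
          X.mulVec ((1 - ((1 - S * (Sᵀ * A * S)⁻¹ * Sᵀ * A) * Z) * R).mulVec v)) /
        (v ⬝ᵥ A.mulVec v) ≤ 1 / lmin) ∧
    (∀ P : Matrix (Fin n) (Fin nc) ℝ, R * P = 1 →
      ∃ v : Fin n → ℝ, v ≠ 0 ∧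
        1 / lmin ≤ (((1 - P * R).mulVec v) ⬝ᵥ
            X.mulVec ((1 - P * R).mulVec v)) / (v ⬝ᵥ A.mulVec v)) :=
  ideal_interpolation_minimizes_measure_general h A X hA hX R hR S hSrank hRS lmin hlmin Z hRZ
end
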